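/- Let ξ(t) = (2π)^{-1/2} t^{-1/2} e^{-t/2} be the density of the χ²₁ distribution and Ξ its CDF, and let φ, Φ be the standard normal density and CDF. Then the function h(t) = ξ(t)/φ(Φ⁻¹(1 - Ξ(t))) satisfies lim_{t→∞} h(t) = 0. -/

import Mathlib

open MeasureTheory Set Real Filter

/-- The standard normal density. -/
noncomputable def stdNormalPDF (x : ℝ) : ℝ := (Real.sqrt (2 * π))⁻¹ * Real.exp (-x ^ 2 / 2)

/-- The standard normal CDF. -/
noncomputable def stdNormalCDF (x : ℝ) : ℝ := ∫ t in Iic x, stdNormalPDF t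

/-- The χ²₁ density. -/
noncomputable def chiSq1PDF (t : ℝ) : ℝ :=
  (Real.sqrt (2 * π))⁻¹ * t ^ (-(1 / 2 : ℝ)) * Real.exp (-t / 2)

/-- The χ²₁ CDF. -/
noncomputable def chiSq1CDF (t : ℝ) : ℝ := ∫ s in Ioc (0 : ℝ) t, chiSq1PDF s

/-!
Write `u(t) = 1 - Ξ(t) = ∫ₜ^∞ ξ` and `q(t) = Φ⁻¹(u(t))`. Since `-ξ` has derivative
`(1 + 1/s)/2 · ξ(s) ≤ ξ(s)` for `s ≥ 1`, the tail dominates the density: `ξ(t) ≤ u(t)` for `t ≥ 1`.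
As `u(t) → 0` we get `q(t) → -∞`, and Mills' inequality `(-q) Φ(q) ≤ φ(q)` for `q < 0` yields
`ξ(t)/φ(q) ≤ ξ(t)/((-q) u(t)) ≤ 1/(-q) → 0`.
-/

open ProbabilityTheory Topology

theorem MeasureTheory.Integrable.continuous_primitive_Iic {E : Type*} [NormedAddCommGroup E]
    [NormedSpace ℝ E] {μ : Measure ℝ} [NullSingletonClass μ] {f : ℝ → E} (hf : Integrable f μ) :
    Continuous fun x => ∫ t in Iic x, f t ∂μ :=
  continuous_iff_continuousAt.2 fun x =>
    (hf.integrableOn.continuousOn_Iic_primitive_Iic (a₀ := x + 1)).continuousAt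
      (Iic_mem_nhds (lt_add_one x))

section StdNormal

lemma stdNormalPDF_pos (x : ℝ) : 0 < stdNormalPDF x := by
  unfold stdNormalPDF
  positivity

lemma stdNormalPDF_eq_gaussianPDFReal : stdNormalPDF = gaussianPDFReal 0 1 := by
  ext x
  simp [stdNormalPDF, gaussianPDFReal]

lemma integrable_stdNormalPDF : Integrable stdNormalPDF :=
  stdNormalPDF_eq_gaussianPDFReal ▸ integrable_gaussianPDFReal 0 1

lemma stdNormalCDF_eq_cdf : stdNormalCDF = cdf (gaussianReal 0 1) := by
  ext x
  rw [cdf_eq_real, measureReal_def, gaussianReal_apply_eq_integral _ one_ne_zero,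
    ENNReal.toReal_ofReal (setIntegral_nonneg measurableSet_Iic fun _ _ =>
      gaussianPDFReal_nonneg _ _ _), stdNormalCDF, stdNormalPDF_eq_gaussianPDFReal]

lemma monotone_stdNormalCDF : Monotone stdNormalCDF :=
  stdNormalCDF_eq_cdf ▸ monotone_cdf _

lemma tendsto_stdNormalCDF_atBot : Tendsto stdNormalCDF atBot (𝓝 0) :=
  stdNormalCDF_eq_cdf ▸ tendsto_cdf_atBot _

lemma tendsto_stdNormalCDF_atTop : Tendsto stdNormalCDF atTop (𝓝 1) :=
  stdNormalCDF_eq_cdf ▸ tendsto_cdf_atTop _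

lemma continuous_stdNormalCDF : Continuous stdNormalCDF :=
  integrable_stdNormalPDF.continuous_primitive_Iic

lemma stdNormalCDF_pos (x : ℝ) : 0 < stdNormalCDF x := by
  rw [stdNormalCDF, setIntegral_pos_iff_support_of_nonneg_ae
    (.of_forall fun y => (stdNormalPDF_pos y).le) integrable_stdNormalPDF.integrableOn,
    Function.support_eq_univ fun y => (stdNormalPDF_pos y).ne', univ_inter, volume_Iic]
  exact ENNReal.zero_lt_top

lemma exists_stdNormalCDF_eq {u : ℝ} (h0 : 0 < u) (h1 : u < 1) : ∃ q, stdNormalCDF q = u :=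
  mem_range_of_exists_le_of_exists_ge continuous_stdNormalCDF
    (tendsto_stdNormalCDF_atBot.eventually_le_const h0).exists
    (tendsto_stdNormalCDF_atTop.eventually_const_le h1).exists

lemma tendsto_atBot_of_tendsto_stdNormalCDF {ι : Type*} {l : Filter ι} {q : ι → ℝ}
    (h : Tendsto (fun i => stdNormalCDF (q i)) l (𝓝 0)) : Tendsto q l atBot := by
  rw [tendsto_atBot]
  intro M
  filter_upwards [h.eventually_lt_const (stdNormalCDF_pos M)] with i hi
  exact (monotone_stdNormalCDF.reflect_lt hi).le

lemma hasDerivAt_stdNormalPDF (x : ℝ) : HasDerivAt stdNormalPDF (-x * stdNormalPDF x) x := by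
  have h : HasDerivAt (fun y : ℝ => -y ^ 2 / 2) (-x) x := by
    simpa [neg_div] using (hasDerivAt_pow 2 x).neg.div_const 2
  exact (h.exp.const_mul (√(2 * π))⁻¹).congr_deriv (by unfold stdNormalPDF; ring)

lemma tendsto_stdNormalPDF_atBot : Tendsto stdNormalPDF atBot (𝓝 0) := by
  have h : Tendsto (fun x : ℝ => -x ^ 2 / 2) atBot atBot :=
    (tendsto_neg_atTop_atBot.comp ((tendsto_pow_atTop two_ne_zero).comp
      tendsto_neg_atBot_atTop)).atBot_div_const two_pos |>.congr fun x => by simp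
  have := (tendsto_exp_atBot.comp h).const_mul (√(2 * π))⁻¹
  rwa [mul_zero] at this

lemma integrable_mul_stdNormalPDF : Integrable fun s : ℝ => s * stdNormalPDF s := by
  refine ((integrable_mul_exp_neg_mul_sq (b := 1 / 2) (by norm_num)).const_mul
    (√(2 * π))⁻¹).congr (.of_forall fun s => ?_)
  simp only [stdNormalPDF]
  rw [show -s ^ 2 / 2 = -(1 / 2) * s ^ 2 by ring]
  ring

lemma integral_Iic_mul_stdNormalPDF (q : ℝ) :
    ∫ s in Iic q, s * stdNormalPDF s = -stdNormalPDF q := by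
  have := integral_Iic_of_hasDerivAt_of_tendsto' (a := q)
    (fun x _ => (hasDerivAt_stdNormalPDF x).neg)
    (by simpa using integrable_mul_stdNormalPDF.integrableOn) tendsto_stdNormalPDF_atBot.neg
  simpa using this

lemma neg_mul_stdNormalCDF_le {q : ℝ} (hq : q < 0) : -q * stdNormalCDF q ≤ stdNormalPDF q := by
  have h : stdNormalCDF q ≤ q⁻¹ * -stdNormalPDF q := by
    rw [← integral_Iic_mul_stdNormalPDF, ← integral_const_mul]
    refine setIntegral_mono_on integrable_stdNormalPDF.integrableOn
      (integrable_mul_stdNormalPDF.integrableOn.const_mul _) measurableSet_Iic fun s hs => ?_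
    rw [← mul_assoc, inv_mul_eq_div]
    exact le_mul_of_one_le_left (stdNormalPDF_pos s).le ((one_le_div_of_neg hq).2 hs)
  calc -q * stdNormalCDF q ≤ -q * (q⁻¹ * -stdNormalPDF q) :=
        mul_le_mul_of_nonneg_left h (neg_nonneg.2 hq.le)
    _ = stdNormalPDF q := by field_simp [hq.ne]

lemma div_stdNormalPDF_le_inv_neg {x q : ℝ} (hx : 0 < x) (hq : q < 0)
    (h : x ≤ stdNormalCDF q) : x / stdNormalPDF q ≤ (-q)⁻¹ := by
  have hq' : 0 < -q := neg_pos.2 hq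
  calc x / stdNormalPDF q ≤ x / (-q * x) :=
        div_le_div_of_nonneg_left hx.le (by positivity)
          ((mul_le_mul_of_nonneg_left h hq'.le).trans (neg_mul_stdNormalCDF_le hq))
    _ = (-q)⁻¹ := by field_simp

end StdNormal

section ChiSq1

lemma chiSq1PDF_pos {t : ℝ} (ht : 0 < t) : 0 < chiSq1PDF t := by
  unfold chiSq1PDF
  positivity

lemma integrableOn_chiSq1PDF : IntegrableOn chiSq1PDF (Ioi 0) := by
  refine IntegrableOn.congr_fun ((integrableOn_rpow_mul_exp_neg_mul_rpow (s := -(1 / 2)) (p := 1)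
    (b := 1 / 2) (by norm_num) one_pos (by norm_num)).const_mul (√(2 * π))⁻¹)
    (fun t _ => ?_) measurableSet_Ioi
  simp only [chiSq1PDF, rpow_one]
  ring_nf

lemma integral_chiSq1PDF : ∫ t in Ioi 0, chiSq1PDF t = 1 := by
  have h := integral_rpow_mul_exp_neg_mul_Ioi (a := 1 / 2) (r := 1 / 2) (by norm_num) (by norm_num)
  have hfun : ∀ t : ℝ, chiSq1PDF t = (√(2 * π))⁻¹ * (t ^ (1 / 2 - 1 : ℝ) * exp (-(1 / 2 * t))) := by
    intro t
    simp only [chiSq1PDF]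
    ring_nf
  simp_rw [hfun, integral_const_mul, h, Gamma_one_half_eq, ← sqrt_eq_rpow, sqrt_mul zero_le_two]
  norm_num
  field_simp

lemma tendsto_chiSq1CDF_atTop : Tendsto chiSq1CDF atTop (𝓝 1) := by
  rw [← integral_chiSq1PDF]
  refine (intervalIntegral_tendsto_integral_Ioi 0 integrableOn_chiSq1PDF tendsto_id).congr' ?_
  filter_upwards [eventually_ge_atTop 0] with t ht
  rw [id, intervalIntegral.integral_of_le ht]
  rfl

lemma one_sub_chiSq1CDF {t : ℝ} (ht : 0 ≤ t) :
    1 - chiSq1CDF t = ∫ s in Ioi t, chiSq1PDF s := by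
  rw [← integral_chiSq1PDF, ← Ioc_union_Ioi_eq_Ioi ht, setIntegral_union (Ioc_disjoint_Ioi le_rfl)
    measurableSet_Ioi (integrableOn_chiSq1PDF.mono_set Ioc_subset_Ioi_self)
    (integrableOn_chiSq1PDF.mono_set (Ioi_subset_Ioi ht)), chiSq1CDF, add_sub_cancel_left]

lemma hasDerivAt_chiSq1PDF {s : ℝ} (hs : 0 < s) :
    HasDerivAt chiSq1PDF (-((1 + s⁻¹) / 2 * chiSq1PDF s)) s := by
  have hexp : HasDerivAt (fun y : ℝ => exp (-y / 2)) (exp (-s / 2) * (-1 / 2)) s :=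
    ((hasDerivAt_id s).neg.div_const 2).exp
  have h := ((hasDerivAt_rpow_const (p := -(1 / 2)) (Or.inl hs.ne')).mul hexp).const_mul
    (√(2 * π))⁻¹
  refine (h.congr_deriv ?_).congr_of_eventuallyEq (.of_forall fun y => ?_)
  · rw [rpow_sub_one hs.ne', chiSq1PDF]
    field_simp
    ring
  · exact mul_assoc _ _ _

lemma tendsto_chiSq1PDF_atTop : Tendsto chiSq1PDF atTop (𝓝 0) := by
  have h : Tendsto (fun t : ℝ => exp (-t / 2)) atTop (𝓝 0) :=
    tendsto_exp_atBot.comp ((tendsto_neg_atTop_atBot).atBot_div_const two_pos)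
  have := ((tendsto_rpow_neg_atTop (y := 1 / 2) (by norm_num)).mul h).const_mul (√(2 * π))⁻¹
  simp only [mul_zero] at this
  exact this.congr fun t => by simp only [chiSq1PDF]; ring

lemma chiSq1PDF_le_integral_Ioi {t : ℝ} (ht : 1 ≤ t) :
    chiSq1PDF t ≤ ∫ s in Ioi t, chiSq1PDF s := by
  have hpos : ∀ s ∈ Ioi t, 0 < s := fun s hs => by linarith [mem_Ioi.1 hs]
  have hderiv : ∀ s ∈ Ici t, HasDerivAt (-chiSq1PDF) ((1 + s⁻¹) / 2 * chiSq1PDF s) s :=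
    fun s hs => by simpa using (hasDerivAt_chiSq1PDF (by linarith [mem_Ici.1 hs])).neg
  have hnonneg : ∀ s ∈ Ioi t, 0 ≤ (1 + s⁻¹) / 2 * chiSq1PDF s := fun s hs => by
    have hs0 := hpos s hs
    exact mul_nonneg (by positivity) (chiSq1PDF_pos hs0).le
  have hlim : Tendsto (-chiSq1PDF) atTop (𝓝 0) := neg_zero (G := ℝ) ▸ tendsto_chiSq1PDF_atTop.neg
  calc chiSq1PDF t = ∫ s in Ioi t, (1 + s⁻¹) / 2 * chiSq1PDF s := by
        rw [integral_Ioi_of_hasDerivAt_of_nonneg' hderiv hnonneg hlim]; simp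
    _ ≤ ∫ s in Ioi t, chiSq1PDF s := by
      refine setIntegral_mono_on (integrableOn_Ioi_deriv_of_nonneg' hderiv hnonneg hlim)
        (integrableOn_chiSq1PDF.mono_set (Ioi_subset_Ioi (by linarith))) measurableSet_Ioi
        fun s hs => ?_
      have : s⁻¹ ≤ 1 := inv_le_one_of_one_le₀ (by linarith [mem_Ioi.1 hs])
      exact mul_le_of_le_one_left (chiSq1PDF_pos (hpos s hs)).le (by linarith)

lemma chiSq1PDF_le_one_sub_chiSq1CDF {t : ℝ} (ht : 1 ≤ t) : chiSq1PDF t ≤ 1 - chiSq1CDF t :=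
  one_sub_chiSq1CDF (zero_le_one.trans ht) ▸ chiSq1PDF_le_integral_Ioi ht

end ChiSq1

/-- `ξ(t)/φ(Φ⁻¹(1 - Ξ(t))) → 0` as `t → ∞`. -/
theorem chiSq_normal_ratio_tendsto_atTop :
    Tendsto (fun t => chiSq1PDF t /
        stdNormalPDF (Function.invFun stdNormalCDF (1 - chiSq1CDF t)))
      atTop (nhds 0) := by
  set q := fun t => Function.invFun stdNormalCDF (1 - chiSq1CDF t)
  have hu : Tendsto (fun t => 1 - chiSq1CDF t) atTop (𝓝 0) := by
    simpa using tendsto_chiSq1CDF_atTop.const_sub 1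
  have hq : ∀ᶠ t in atTop, 1 ≤ t ∧ stdNormalCDF (q t) = 1 - chiSq1CDF t := by
    filter_upwards [eventually_ge_atTop 1, hu.eventually_lt_const one_pos] with t ht hlt
    have hpos := (chiSq1PDF_pos (one_pos.trans_le ht)).trans_le (chiSq1PDF_le_one_sub_chiSq1CDF ht)
    exact ⟨ht, Function.invFun_eq (exists_stdNormalCDF_eq hpos hlt)⟩
  have hq_atBot : Tendsto q atTop atBot :=
    tendsto_atBot_of_tendsto_stdNormalCDF (hu.congr' (hq.mono fun _ h => h.2.symm))
  refine squeeze_zero' ?_ ?_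
    (tendsto_inv_atTop_zero.comp (tendsto_neg_atBot_atTop.comp hq_atBot))
  · filter_upwards [eventually_gt_atTop 0] with t ht
    exact div_nonneg (chiSq1PDF_pos ht).le (stdNormalPDF_pos _).le
  · filter_upwards [hq, hq_atBot.eventually_lt_atBot 0] with t ⟨ht, hΦ⟩ hneg
    exact div_stdNormalPDF_le_inv_neg (chiSq1PDF_pos (one_pos.trans_le ht)) hneg
      (hΦ.symm ▸ chiSq1PDF_le_one_sub_chiSq1CDF ht)
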